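/- Let θ ∈ (0, π/2) and let u be a model eigenfunction of H(θ) with eigenvalue σ. Let λ ∈ ℝ, let g : ℝ²₊ → ℝ be smooth up to the boundary and Schwartz-class, and let v be smooth up to the boundary, Schwartz-class, with ∂_t v(s,0) = 0 for all s, solving (H(θ) − σ) v = λ u − g on ℝ²₊. Then 2 sin θ · ∫_{ℝ²₊} V_θ v u ds dt = ∫_{ℝ²₊} ∂_s g · u ds dt. -/

import Mathlib

open Real MeasureTheory Set

noncomputable section

/-- Partial derivative with respect to the first variable. -/
def pd1 (u : ℝ → ℝ → ℝ) : ℝ → ℝ → ℝ := fun s t => deriv (fun x => u x t) s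

/-- Partial derivative with respect to the second variable. -/
def pd2 (u : ℝ → ℝ → ℝ) : ℝ → ℝ → ℝ := fun s t => deriv (fun y => u s y) t

/-- The potential `V_θ(s,t) = t cos θ − s sin θ`. -/
def Vpot (θ : ℝ) : ℝ → ℝ → ℝ := fun s t => t * Real.cos θ - s * Real.sin θ

/-- The operator `H(θ) = −∂_s² − ∂_t² + V_θ²` applied to `u`. -/
def Hop (θ : ℝ) (u : ℝ → ℝ → ℝ) : ℝ → ℝ → ℝ :=
  fun s t => - pd1 (pd1 u) s t - pd2 (pd2 u) s t + (Vpot θ s t)^2 * u s t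

/-- Integral over the half-plane `{t > 0}` with respect to `ds dt`. -/
def intHalf (f : ℝ → ℝ → ℝ) : ℝ := ∫ s : ℝ, ∫ t in Set.Ioi (0:ℝ), f s t

/-- Schwartz-class on the closed half-plane: all iterated partial derivatives decay
faster than any power of `|s| + t`. -/
def SchwartzHalf (u : ℝ → ℝ → ℝ) : Prop :=
  ∀ k l n : ℕ, ∃ C : ℝ, ∀ s t : ℝ, 0 ≤ t →
    |pd1^[k] (pd2^[l] u) s t| ≤ C * (1 + |s| + t) ^ (-(n:ℝ))

/-- A model eigenfunction of `H(θ)` with eigenvalue `σ`: smooth up to the boundary,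
Schwartz-class, `L²`-normalized, Neumann boundary condition, and `H(θ)u = σu` on `{t ≥ 0}`. -/
structure IsModelEigen (θ : ℝ) (u : ℝ → ℝ → ℝ) (σ : ℝ) : Prop where
  smooth : ∀ n : ℕ, ContDiff ℝ n (fun p : ℝ × ℝ => u p.1 p.2)
  schwartz : SchwartzHalf u
  normalized : intHalf (fun s t => (u s t)^2) = 1
  neumann : ∀ s : ℝ, pd2 u s 0 = 0
  eigen : ∀ s t : ℝ, 0 ≤ t → Hop θ u s t = σ * u s t

/-!
Differentiating `H(θ)u = σu` in `s` gives `(H(θ) − σ) ∂ₛu = 2 sin θ · V_θ u`, because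
`∂ₛ(V_θ²) = −2 sin θ · V_θ`; moreover `∂ₛu` again satisfies the Neumann condition. Green's identity
for `H(θ)` under Neumann conditions, applied to `v` and `∂ₛu`, turns this into
`2 sin θ ∫ V_θ v u = ∫ (λu − g) ∂ₛu`. Integrating by parts in `s` gives `∫ u ∂ₛu = 0` and
`−∫ g ∂ₛu = ∫ ∂ₛg · u`.
-/

open Function Filter Topology
open scoped ContDiff

section Partial

variable {f : ℝ → ℝ → ℝ}

lemma hasDerivAt_pd1 (hf : Differentiable ℝ (uncurry f)) (s t : ℝ) :
    HasDerivAt (fun x => f x t) (pd1 f s t) s := by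
  have hline : DifferentiableAt ℝ (fun x : ℝ => (x, t)) s := by fun_prop
  exact ((hf (s, t)).comp s hline).hasDerivAt

lemma hasDerivAt_pd2 (hf : Differentiable ℝ (uncurry f)) (s t : ℝ) :
    HasDerivAt (fun y => f s y) (pd2 f s t) t := by
  have hline : DifferentiableAt ℝ (fun y : ℝ => (s, y)) t := by fun_prop
  exact ((hf (s, t)).comp t hline).hasDerivAt

lemma uncurry_pd1_eq_fderiv (hf : Differentiable ℝ (uncurry f)) :
    uncurry (pd1 f) = fun p => fderiv ℝ (uncurry f) p (1, 0) := by
  ext ⟨s, t⟩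
  have hline : HasDerivAt (fun x : ℝ => (x, t)) ((1 : ℝ), (0 : ℝ)) s :=
    (hasDerivAt_id s).prodMk (hasDerivAt_const s t)
  exact ((hf (s, t)).hasFDerivAt.comp_hasDerivAt s hline).deriv

lemma uncurry_pd2_eq_fderiv (hf : Differentiable ℝ (uncurry f)) :
    uncurry (pd2 f) = fun p => fderiv ℝ (uncurry f) p (0, 1) := by
  ext ⟨s, t⟩
  have hline : HasDerivAt (fun y : ℝ => (s, y)) ((0 : ℝ), (1 : ℝ)) t :=
    (hasDerivAt_const t s).prodMk (hasDerivAt_id t)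
  exact ((hf (s, t)).hasFDerivAt.comp_hasDerivAt t hline).deriv

lemma ContDiff.uncurry_pd1 (hf : ContDiff ℝ ∞ (uncurry f)) : ContDiff ℝ ∞ (uncurry (pd1 f)) := by
  rw [uncurry_pd1_eq_fderiv (hf.differentiable (by simp))]
  exact (hf.fderiv_right (m := ∞) (by simp)).clm_apply contDiff_const

lemma ContDiff.uncurry_pd2 (hf : ContDiff ℝ ∞ (uncurry f)) : ContDiff ℝ ∞ (uncurry (pd2 f)) := by
  rw [uncurry_pd2_eq_fderiv (hf.differentiable (by simp))]
  exact (hf.fderiv_right (m := ∞) (by simp)).clm_apply contDiff_const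

lemma pd1_pd2_comm (hf : ContDiff ℝ ∞ (uncurry f)) : pd1 (pd2 f) = pd2 (pd1 f) := by
  have hd : Differentiable ℝ (fderiv ℝ (uncurry f)) :=
    (hf.fderiv_right (m := ∞) (by simp)).differentiable (by simp)
  ext s t
  have hsymm := (hf.contDiffAt (x := (s, t))).isSymmSndFDerivAt
    (by simp [ENat.LEInfty.out]) (1, 0) (0, 1)
  rw [← uncurry_apply_pair (pd1 _), ← uncurry_apply_pair (pd2 (pd1 f)),
    uncurry_pd1_eq_fderiv (hf.uncurry_pd2.differentiable (by simp)),
    uncurry_pd2_eq_fderiv (hf.uncurry_pd1.differentiable (by simp)),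
    uncurry_pd2_eq_fderiv (hf.differentiable (by simp)),
    uncurry_pd1_eq_fderiv (hf.differentiable (by simp))]
  dsimp only
  rw [fderiv_clm_apply (hd _) (differentiableAt_const _),
    fderiv_clm_apply (hd _) (differentiableAt_const _)]
  simpa using hsymm

lemma ContDiff.uncurry_iterate_pd1 (hf : ContDiff ℝ ∞ (uncurry f)) (k : ℕ) :
    ContDiff ℝ ∞ (uncurry (pd1^[k] f)) := by
  induction k with
  | zero => exact hf
  | succ k ih => rw [iterate_succ_apply']; exact ih.uncurry_pd1

lemma ContDiff.uncurry_iterate_pd2 (hf : ContDiff ℝ ∞ (uncurry f)) (l : ℕ) :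
    ContDiff ℝ ∞ (uncurry (pd2^[l] f)) := by
  induction l with
  | zero => exact hf
  | succ l ih => rw [iterate_succ_apply']; exact ih.uncurry_pd2

lemma iterate_pd2_pd1 (hf : ContDiff ℝ ∞ (uncurry f)) (l : ℕ) :
    pd2^[l] (pd1 f) = pd1 (pd2^[l] f) := by
  induction l with
  | zero => rfl
  | succ l ih =>
    rw [iterate_succ_apply', iterate_succ_apply', ih, pd1_pd2_comm (hf.uncurry_iterate_pd2 l)]

lemma schwartzHalf_pd1 (hf : ContDiff ℝ ∞ (uncurry f)) (h : SchwartzHalf f) :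
    SchwartzHalf (pd1 f) := by
  intro k l n
  rw [iterate_pd2_pd1 hf, ← iterate_succ_apply]
  exact h (k + 1) l n

lemma schwartzHalf_pd2 (h : SchwartzHalf f) : SchwartzHalf (pd2 f) := by
  intro k l n
  rw [← iterate_succ_apply]
  exact h k (l + 1) n

lemma pd2_pd1_zero_of_neumann (hf : ContDiff ℝ ∞ (uncurry f)) (hN : ∀ s, pd2 f s 0 = 0)
    (s : ℝ) : pd2 (pd1 f) s 0 = 0 := by
  rw [← pd1_pd2_comm hf, pd1, funext hN, deriv_const]

end Partial

section Operator

variable {θ : ℝ} {u : ℝ → ℝ → ℝ}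

lemma pd1_Hop (hu : ContDiff ℝ ∞ (uncurry u)) (s t : ℝ) :
    pd1 (Hop θ u) s t = Hop θ (pd1 u) s t - 2 * Real.sin θ * (Vpot θ s t * u s t) := by
  have hdiff {f : ℝ → ℝ → ℝ} (hf : ContDiff ℝ ∞ (uncurry f)) :
      HasDerivAt (fun x => f x t) (pd1 f s t) s :=
    hasDerivAt_pd1 (hf.differentiable (by simp)) s t
  have hV : HasDerivAt (fun x => Vpot θ x t) (-Real.sin θ) s := by
    simpa [Vpot] using ((hasDerivAt_id s).mul_const (Real.sin θ)).const_sub (t * Real.cos θ)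
  have hH : HasDerivAt (fun x => Hop θ u x t) _ s :=
    ((hdiff hu.uncurry_pd1.uncurry_pd1).neg.sub (hdiff hu.uncurry_pd2.uncurry_pd2)).add
      ((hV.pow 2).mul (hdiff hu))
  rw [pd1, hH.deriv, Hop, pd1_pd2_comm hu.uncurry_pd2, pd1_pd2_comm hu]
  simp only [Pi.pow_apply]
  push_cast
  ring

lemma IsModelEigen.Hop_pd1_sub {σ : ℝ} (hu : IsModelEigen θ u σ) {s t : ℝ} (ht : 0 ≤ t) :
    Hop θ (pd1 u) s t - σ * pd1 u s t = 2 * Real.sin θ * (Vpot θ s t * u s t) := by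
  have hu' : ContDiff ℝ ∞ (uncurry u) := contDiff_infty.mpr hu.smooth
  have hline : (fun x => Hop θ u x t) = fun x => σ * u x t := funext fun x => hu.eigen x t ht
  have hσ : pd1 (Hop θ u) s t = σ * pd1 u s t := by
    rw [pd1, hline]
    exact ((hasDerivAt_pd1 (hu'.differentiable (by simp)) s t).const_mul σ).deriv
  linear_combination hσ - pd1_Hop hu' s t

end Operator

def halfPlaneMeasure : Measure (ℝ × ℝ) := volume.prod (volume.restrict (Ioi 0))

lemma halfPlaneMeasure_eq_restrict : halfPlaneMeasure = volume.restrict (univ ×ˢ Ioi 0) := by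
  rw [halfPlaneMeasure, Measure.volume_eq_prod, ← Measure.prod_restrict, Measure.restrict_univ]

lemma ae_halfPlaneMeasure_pos : ∀ᵐ p ∂halfPlaneMeasure, 0 < p.2 := by
  rw [halfPlaneMeasure_eq_restrict, ae_restrict_iff' (MeasurableSet.univ.prod measurableSet_Ioi)]
  exact .of_forall fun p hp => hp.2

structure RapidDecay (f : ℝ → ℝ → ℝ) : Prop where
  continuous : Continuous (uncurry f)
  decay : ∀ r : ℝ, ∃ C, ∀ s t : ℝ, 0 ≤ t → |f s t| ≤ C * (1 + |s| + t) ^ (-r)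

namespace RapidDecay

variable {f g : ℝ → ℝ → ℝ}

lemma exists_nonneg_bound (hf : RapidDecay f) (r : ℝ) :
    ∃ C, 0 ≤ C ∧ ∀ s t : ℝ, 0 ≤ t → |f s t| ≤ C * (1 + |s| + t) ^ (-r) := by
  obtain ⟨C, hC⟩ := hf.decay r
  exact ⟨C, by simpa using (abs_nonneg _).trans (hC 0 0 le_rfl), hC⟩

lemma mul (hf : RapidDecay f) (hg : RapidDecay g) : RapidDecay (fun s t => f s t * g s t) where
  continuous := hf.continuous.mul hg.continuous
  decay r := by
    obtain ⟨C, hC⟩ := hf.decay r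
    obtain ⟨D, hD⟩ := hg.decay 0
    refine ⟨C * D, fun s t ht => ?_⟩
    have hg_le : |g s t| ≤ D := by simpa using hD s t ht
    calc |f s t * g s t| = |f s t| * |g s t| := abs_mul _ _
      _ ≤ C * (1 + |s| + t) ^ (-r) * D :=
        mul_le_mul (hC s t ht) hg_le (abs_nonneg _) ((abs_nonneg _).trans (hC s t ht))
      _ = C * D * (1 + |s| + t) ^ (-r) := by ring

lemma add (hf : RapidDecay f) (hg : RapidDecay g) : RapidDecay (fun s t => f s t + g s t) where
  continuous := hf.continuous.add hg.continuous
  decay r := by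
    obtain ⟨C, hC⟩ := hf.decay r
    obtain ⟨D, hD⟩ := hg.decay r
    refine ⟨C + D, fun s t ht => ?_⟩
    calc |f s t + g s t| ≤ |f s t| + |g s t| := abs_add_le _ _
      _ ≤ (C + D) * (1 + |s| + t) ^ (-r) := by linarith [hC s t ht, hD s t ht]

lemma const_mul (c : ℝ) (hf : RapidDecay f) : RapidDecay (fun s t => c * f s t) where
  continuous := continuous_const.mul hf.continuous
  decay r := by
    obtain ⟨C, hC⟩ := hf.decay r
    refine ⟨|c| * C, fun s t ht => ?_⟩
    rw [abs_mul, mul_assoc]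
    exact mul_le_mul_of_nonneg_left (hC s t ht) (abs_nonneg c)

lemma sub (hf : RapidDecay f) (hg : RapidDecay g) : RapidDecay (fun s t => f s t - g s t) := by
  simpa [sub_eq_add_neg] using hf.add (hg.const_mul (-1))

lemma Vpot_mul (θ : ℝ) (hf : RapidDecay f) : RapidDecay (fun s t => Vpot θ s t * f s t) where
  continuous := by
    refine Continuous.mul ?_ hf.continuous
    simp only [Vpot]
    fun_prop
  decay r := by
    obtain ⟨C, hC⟩ := hf.decay (r + 1)
    refine ⟨C, fun s t ht => ?_⟩
    have hpos : 0 < 1 + |s| + t := by positivity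
    have hV : |Vpot θ s t| ≤ 1 + |s| + t := by
      have hcos : |t * Real.cos θ| ≤ t := by
        rw [abs_mul, abs_of_nonneg ht]; exact mul_le_of_le_one_right ht (abs_cos_le_one θ)
      have hsin : |s * Real.sin θ| ≤ |s| := by
        rw [abs_mul]; exact mul_le_of_le_one_right (abs_nonneg s) (abs_sin_le_one θ)
      have := abs_sub (t * Real.cos θ) (s * Real.sin θ)
      simp only [Vpot]
      linarith
    calc |Vpot θ s t * f s t| = |Vpot θ s t| * |f s t| := abs_mul _ _
      _ ≤ (1 + |s| + t) * (C * (1 + |s| + t) ^ (-(r + 1))) :=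
        mul_le_mul hV (hC s t ht) (abs_nonneg _) hpos.le
      _ = C * (1 + |s| + t) ^ (-r) := by
        rw [neg_add, Real.rpow_add hpos, Real.rpow_neg_one]
        field_simp

lemma integrable (hf : RapidDecay f) : Integrable (uncurry f) halfPlaneMeasure := by
  obtain ⟨C, hC0, hC⟩ := hf.exists_nonneg_bound 3
  have hmajor : Integrable (fun p : ℝ × ℝ => C * (1 + ‖p‖) ^ (-(3 : ℝ))) halfPlaneMeasure := by
    rw [halfPlaneMeasure_eq_restrict]
    exact ((integrable_one_add_norm (by simp; norm_num)).const_mul C).integrableOn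
  refine hmajor.mono' hf.continuous.aestronglyMeasurable ?_
  filter_upwards [ae_halfPlaneMeasure_pos] with ⟨s, t⟩ ht
  have hnorm : ‖(s, t)‖ ≤ |s| + t := by
    rw [Prod.norm_def, Real.norm_eq_abs, Real.norm_eq_abs, abs_of_pos ht]
    exact max_le (by linarith) (by linarith [abs_nonneg s])
  calc ‖uncurry f (s, t)‖ ≤ C * (1 + |s| + t) ^ (-(3 : ℝ)) := hC s t ht.le
    _ ≤ C * (1 + ‖(s, t)‖) ^ (-(3 : ℝ)) :=
      mul_le_mul_of_nonneg_left
        (Real.rpow_le_rpow_of_nonpos (by positivity) (by linarith) (by norm_num)) hC0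

lemma integrable_horizontal (hf : RapidDecay f) {t : ℝ} (ht : 0 ≤ t) :
    Integrable (fun s => f s t) := by
  obtain ⟨C, hC0, hC⟩ := hf.exists_nonneg_bound 2
  have hmajor : Integrable (fun s : ℝ => C * (1 + ‖s‖) ^ (-(2 : ℝ))) :=
    (integrable_one_add_norm (by simp)).const_mul C
  refine hmajor.mono'
    (hf.continuous.comp (continuous_id.prodMk continuous_const)).aestronglyMeasurable
    (.of_forall fun s => ?_)
  calc ‖f s t‖ ≤ C * (1 + |s| + t) ^ (-(2 : ℝ)) := hC s t ht
    _ ≤ C * (1 + ‖s‖) ^ (-(2 : ℝ)) :=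
      mul_le_mul_of_nonneg_left
        (Real.rpow_le_rpow_of_nonpos (by positivity) (by simp [ht]) (by norm_num)) hC0

lemma integrableOn_vertical (hf : RapidDecay f) (s : ℝ) :
    IntegrableOn (fun t => f s t) (Ioi 0) := by
  obtain ⟨C, hC0, hC⟩ := hf.exists_nonneg_bound 2
  have hmajor : IntegrableOn (fun t : ℝ => C * (1 + ‖t‖) ^ (-(2 : ℝ))) (Ioi 0) :=
    ((integrable_one_add_norm (by simp)).const_mul C).integrableOn
  refine hmajor.mono'
    (hf.continuous.comp (continuous_const.prodMk continuous_id)).aestronglyMeasurable ?_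
  filter_upwards [ae_restrict_mem measurableSet_Ioi] with t (ht : 0 < t)
  calc ‖f s t‖ ≤ C * (1 + |s| + t) ^ (-(2 : ℝ)) := hC s t ht.le
    _ ≤ C * (1 + ‖t‖) ^ (-(2 : ℝ)) :=
      mul_le_mul_of_nonneg_left
        (Real.rpow_le_rpow_of_nonpos (by positivity) (by simp [abs_of_pos ht]) (by norm_num))
        hC0

lemma tendsto_zero (hf : RapidDecay f) {α : Type*} {l : Filter α} {x y : α → ℝ}
    (hy : ∀ᶠ a in l, 0 ≤ y a) (hxy : Tendsto (fun a => |x a| + y a) l atTop) :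
    Tendsto (fun a => f (x a) (y a)) l (𝓝 0) := by
  obtain ⟨C, hC⟩ := hf.decay 1
  have hmajor : Tendsto (fun a => C * (1 + |x a| + y a) ^ (-(1 : ℝ))) l (𝓝 0) := by
    have h := ((tendsto_rpow_neg_atTop one_pos).comp
      (tendsto_atTop_add_const_left _ 1 hxy)).const_mul C
    simpa [add_assoc] using h
  refine squeeze_zero_norm' ?_ hmajor
  filter_upwards [hy] with a ha
  exact hC (x a) (y a) ha

end RapidDecay

lemma SchwartzHalf.rapidDecay {f : ℝ → ℝ → ℝ} (hf : ContDiff ℝ ∞ (uncurry f))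
    (h : SchwartzHalf f) (k l : ℕ) : RapidDecay (pd1^[k] (pd2^[l] f)) where
  continuous := ((hf.uncurry_iterate_pd2 l).uncurry_iterate_pd1 k).continuous
  decay r := by
    obtain ⟨C, hC⟩ := h k l ⌈r⌉₊
    refine ⟨max C 0, fun s t ht => ?_⟩
    have hone : 1 ≤ 1 + |s| + t := by have := abs_nonneg s; linarith
    calc |pd1^[k] (pd2^[l] f) s t| ≤ C * (1 + |s| + t) ^ (-(⌈r⌉₊ : ℝ)) := hC s t ht
      _ ≤ max C 0 * (1 + |s| + t) ^ (-r) := by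
        gcongr
        · exact le_max_left C 0
        · exact Nat.le_ceil r

section HalfPlaneIntegral

variable {f g a b : ℝ → ℝ → ℝ}

lemma intHalf_eq_integral (hf : Integrable (uncurry f) halfPlaneMeasure) :
    intHalf f = ∫ p, uncurry f p ∂halfPlaneMeasure :=
  (integral_prod _ hf).symm

lemma intHalf_congr (h : ∀ s t, 0 ≤ t → f s t = g s t) : intHalf f = intHalf g :=
  integral_congr_ae <| .of_forall fun s =>
    setIntegral_congr_fun measurableSet_Ioi fun t ht => h s t (le_of_lt ht)

lemma intHalf_const_mul (c : ℝ) (f : ℝ → ℝ → ℝ) :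
    intHalf (fun s t => c * f s t) = c * intHalf f := by
  simp only [intHalf, integral_const_mul]

lemma intHalf_add (hf : Integrable (uncurry f) halfPlaneMeasure)
    (hg : Integrable (uncurry g) halfPlaneMeasure) :
    intHalf (fun s t => f s t + g s t) = intHalf f + intHalf g := by
  rw [intHalf_eq_integral hf, intHalf_eq_integral hg,
    intHalf_eq_integral (f := fun s t => f s t + g s t) (hf.add hg)]
  exact integral_add hf hg

lemma intHalf_sub (hf : Integrable (uncurry f) halfPlaneMeasure)
    (hg : Integrable (uncurry g) halfPlaneMeasure) :
    intHalf (fun s t => f s t - g s t) = intHalf f - intHalf g := by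
  rw [intHalf_eq_integral hf, intHalf_eq_integral hg,
    intHalf_eq_integral (f := fun s t => f s t - g s t) (hf.sub hg)]
  exact integral_sub hf hg

lemma integral_pd1_mul (ha : Differentiable ℝ (uncurry a)) (hb : Differentiable ℝ (uncurry b))
    (hab : RapidDecay fun s t => a s t * b s t) (ha'b : RapidDecay fun s t => pd1 a s t * b s t)
    (hab' : RapidDecay fun s t => a s t * pd1 b s t) {t : ℝ} (ht : 0 ≤ t) :
    ∫ s, pd1 a s t * b s t = -∫ s, a s t * pd1 b s t := by
  have hderiv (s : ℝ) : HasDerivAt (fun x => a x t * b x t)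
      (pd1 a s t * b s t + a s t * pd1 b s t) s :=
    (hasDerivAt_pd1 ha s t).mul (hasDerivAt_pd1 hb s t)
  have hlim {l : Filter ℝ} (hl : Tendsto (fun s : ℝ => |s|) l atTop) :
      Tendsto (fun s => a s t * b s t) l (𝓝 0) :=
    hab.tendsto_zero (y := fun _ => t) (.of_forall fun _ => ht)
      (tendsto_atTop_add_const_right _ t hl)
  have h := integral_of_hasDerivAt_of_tendsto hderiv
    ((ha'b.integrable_horizontal ht).add (hab'.integrable_horizontal ht))
    (hlim tendsto_abs_atBot_atTop) (hlim tendsto_abs_atTop_atTop)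
  rw [integral_add (ha'b.integrable_horizontal ht) (hab'.integrable_horizontal ht), sub_zero] at h
  linarith

lemma intHalf_pd1_mul (ha : Differentiable ℝ (uncurry a)) (hb : Differentiable ℝ (uncurry b))
    (hab : RapidDecay fun s t => a s t * b s t) (ha'b : RapidDecay fun s t => pd1 a s t * b s t)
    (hab' : RapidDecay fun s t => a s t * pd1 b s t) :
    intHalf (fun s t => pd1 a s t * b s t) = -intHalf (fun s t => a s t * pd1 b s t) := by
  rw [intHalf, intHalf, integral_integral_swap ha'b.integrable,
    integral_integral_swap hab'.integrable, ← integral_neg]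
  exact setIntegral_congr_fun measurableSet_Ioi fun t ht =>
    integral_pd1_mul ha hb hab ha'b hab' (le_of_lt ht)

lemma integral_Ioi_pd2_mul (ha : Differentiable ℝ (uncurry a))
    (hb : Differentiable ℝ (uncurry b))
    (hab : RapidDecay fun s t => a s t * b s t) (ha'b : RapidDecay fun s t => pd2 a s t * b s t)
    (hab' : RapidDecay fun s t => a s t * pd2 b s t) (s : ℝ) :
    ∫ t in Ioi 0, pd2 a s t * b s t = -(a s 0 * b s 0) - ∫ t in Ioi 0, a s t * pd2 b s t := by
  have hderiv (t : ℝ) (_ : t ∈ Ici 0) : HasDerivAt (fun y => a s y * b s y)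
      (pd2 a s t * b s t + a s t * pd2 b s t) t :=
    (hasDerivAt_pd2 ha s t).mul (hasDerivAt_pd2 hb s t)
  have hlim : Tendsto (fun t => a s t * b s t) atTop (𝓝 0) :=
    hab.tendsto_zero (x := fun _ => s) (eventually_ge_atTop 0)
      (tendsto_atTop_add_const_left _ _ tendsto_id)
  have h := integral_Ioi_of_hasDerivAt_of_tendsto' hderiv
    ((ha'b.integrableOn_vertical s).add (hab'.integrableOn_vertical s)) hlim
  rw [integral_add (ha'b.integrableOn_vertical s) (hab'.integrableOn_vertical s)] at h
  linarith

lemma intHalf_pd2_mul (ha : Differentiable ℝ (uncurry a)) (hb : Differentiable ℝ (uncurry b))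
    (hab : RapidDecay fun s t => a s t * b s t) (ha'b : RapidDecay fun s t => pd2 a s t * b s t)
    (hab' : RapidDecay fun s t => a s t * pd2 b s t) (hbdry : ∀ s, a s 0 * b s 0 = 0) :
    intHalf (fun s t => pd2 a s t * b s t) = -intHalf (fun s t => a s t * pd2 b s t) := by
  rw [intHalf, intHalf, ← integral_neg]
  congr 1 with s
  rw [integral_Ioi_pd2_mul ha hb hab ha'b hab' s, hbdry, neg_zero, zero_sub]

lemma intHalf_pd1_mul_of_schwartz (ha : ContDiff ℝ ∞ (uncurry a))
    (hb : ContDiff ℝ ∞ (uncurry b)) (hsa : SchwartzHalf a) (hsb : SchwartzHalf b) :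
    intHalf (fun s t => pd1 a s t * b s t) = -intHalf (fun s t => a s t * pd1 b s t) :=
  have A := hsa.rapidDecay ha
  have B := hsb.rapidDecay hb
  intHalf_pd1_mul (ha.differentiable (by simp)) (hb.differentiable (by simp))
    ((A 0 0).mul (B 0 0)) ((A 1 0).mul (B 0 0)) ((A 0 0).mul (B 1 0))

lemma intHalf_pd2_mul_of_schwartz (ha : ContDiff ℝ ∞ (uncurry a))
    (hb : ContDiff ℝ ∞ (uncurry b)) (hsa : SchwartzHalf a) (hsb : SchwartzHalf b)
    (hbdry : ∀ s, a s 0 * b s 0 = 0) :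
    intHalf (fun s t => pd2 a s t * b s t) = -intHalf (fun s t => a s t * pd2 b s t) :=
  have A := hsa.rapidDecay ha
  have B := hsb.rapidDecay hb
  intHalf_pd2_mul (ha.differentiable (by simp)) (hb.differentiable (by simp))
    ((A 0 0).mul (B 0 0)) ((A 0 1).mul (B 0 0)) ((A 0 0).mul (B 0 1)) hbdry

end HalfPlaneIntegral

theorem intHalf_Hop_mul_sub_mul_Hop (θ : ℝ) {a b : ℝ → ℝ → ℝ}
    (ha : ContDiff ℝ ∞ (uncurry a)) (hb : ContDiff ℝ ∞ (uncurry b))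
    (hsa : SchwartzHalf a) (hsb : SchwartzHalf b)
    (hNa : ∀ s, pd2 a s 0 = 0) (hNb : ∀ s, pd2 b s 0 = 0) :
    intHalf (fun s t => Hop θ a s t * b s t - a s t * Hop θ b s t) = 0 := by
  obtain ⟨a₀, a₁₁, a₂₂⟩ : RapidDecay a ∧ RapidDecay (pd1 (pd1 a)) ∧ RapidDecay (pd2 (pd2 a)) :=
    ⟨hsa.rapidDecay ha 0 0, hsa.rapidDecay ha 2 0, hsa.rapidDecay ha 0 2⟩
  obtain ⟨b₀, b₁₁, b₂₂⟩ : RapidDecay b ∧ RapidDecay (pd1 (pd1 b)) ∧ RapidDecay (pd2 (pd2 b)) :=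
    ⟨hsb.rapidDecay hb 0 0, hsb.rapidDecay hb 2 0, hsb.rapidDecay hb 0 2⟩
  have h11 : intHalf (fun s t => pd1 (pd1 a) s t * b s t)
      = intHalf (fun s t => a s t * pd1 (pd1 b) s t) := by
    rw [intHalf_pd1_mul_of_schwartz ha.uncurry_pd1 hb (schwartzHalf_pd1 ha hsa) hsb,
      intHalf_pd1_mul_of_schwartz ha hb.uncurry_pd1 hsa (schwartzHalf_pd1 hb hsb), neg_neg]
  have h22 : intHalf (fun s t => pd2 (pd2 a) s t * b s t)
      = intHalf (fun s t => a s t * pd2 (pd2 b) s t) := by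
    rw [intHalf_pd2_mul_of_schwartz ha.uncurry_pd2 hb (schwartzHalf_pd2 hsa) hsb
        (fun s => by rw [hNa, zero_mul]),
      intHalf_pd2_mul_of_schwartz ha hb.uncurry_pd2 hsa (schwartzHalf_pd2 hsb)
        (fun s => by rw [hNb, mul_zero]), neg_neg]
  have hpt (s t : ℝ) (_ : 0 ≤ t) : Hop θ a s t * b s t - a s t * Hop θ b s t
      = (a s t * pd1 (pd1 b) s t - pd1 (pd1 a) s t * b s t)
        + (a s t * pd2 (pd2 b) s t - pd2 (pd2 a) s t * b s t) := by
    simp only [Hop]; ring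
  rw [intHalf_congr hpt,
    intHalf_add ((a₀.mul b₁₁).sub (a₁₁.mul b₀)).integrable
      ((a₀.mul b₂₂).sub (a₂₂.mul b₀)).integrable,
    intHalf_sub (a₀.mul b₁₁).integrable (a₁₁.mul b₀).integrable,
    intHalf_sub (a₀.mul b₂₂).integrable (a₂₂.mul b₀).integrable, h11, h22, sub_self, sub_self,
    add_zero]

theorem Vu1_identity_general (θ : ℝ)
    (u : ℝ → ℝ → ℝ) (σ : ℝ) (hu : IsModelEigen θ u σ)
    (lam : ℝ) (g : ℝ → ℝ → ℝ)
    (hgsmooth : ∀ n : ℕ, ContDiff ℝ n (fun p : ℝ × ℝ => g p.1 p.2))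
    (hgschwartz : SchwartzHalf g)
    (v : ℝ → ℝ → ℝ) (hvsmooth : ∀ n : ℕ, ContDiff ℝ n (fun p : ℝ × ℝ => v p.1 p.2))
    (hvschwartz : SchwartzHalf v) (hvneumann : ∀ s : ℝ, pd2 v s 0 = 0)
    (hvsol : ∀ s t : ℝ, 0 ≤ t → Hop θ v s t - σ * v s t = lam * u s t - g s t) :
    2 * Real.sin θ * intHalf (fun s t => Vpot θ s t * v s t * u s t) =
      intHalf (fun s t => pd1 g s t * u s t) := by
  have hu' : ContDiff ℝ ∞ (uncurry u) := contDiff_infty.mpr hu.smooth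
  have hv' : ContDiff ℝ ∞ (uncurry v) := contDiff_infty.mpr hvsmooth
  have hg' : ContDiff ℝ ∞ (uncurry g) := contDiff_infty.mpr hgsmooth
  obtain ⟨u₀, u₁, v₀, g₀⟩ : RapidDecay u ∧ RapidDecay (pd1 u) ∧ RapidDecay v ∧ RapidDecay g :=
    ⟨hu.schwartz.rapidDecay hu' 0 0, hu.schwartz.rapidDecay hu' 1 0,
      hvschwartz.rapidDecay hv' 0 0, hgschwartz.rapidDecay hg' 0 0⟩
  have hgreen := intHalf_Hop_mul_sub_mul_Hop θ hv' hu'.uncurry_pd1 hvschwartz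
    (schwartzHalf_pd1 hu' hu.schwartz) hvneumann (pd2_pd1_zero_of_neumann hu' hu.neumann)
  have hpt (s t : ℝ) (ht : 0 ≤ t) : Hop θ v s t * pd1 u s t - v s t * Hop θ (pd1 u) s t
      = (lam * (u s t * pd1 u s t) - g s t * pd1 u s t)
        - 2 * Real.sin θ * (Vpot θ s t * v s t * u s t) := by
    linear_combination pd1 u s t * hvsol s t ht - v s t * hu.Hop_pd1_sub ht
  rw [intHalf_congr hpt,
    intHalf_sub (((u₀.mul u₁).const_mul lam).sub (g₀.mul u₁)).integrable
      (((v₀.Vpot_mul θ).mul u₀).const_mul _).integrable,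
    intHalf_sub ((u₀.mul u₁).const_mul lam).integrable (g₀.mul u₁).integrable,
    intHalf_const_mul, intHalf_const_mul] at hgreen
  have huu : intHalf (fun s t => u s t * pd1 u s t) = 0 := by
    have h := intHalf_pd1_mul_of_schwartz hu' hu' hu.schwartz hu.schwartz
    rw [intHalf_congr (fun s t _ => mul_comm (pd1 u s t) (u s t))] at h
    linarith
  have hgu := intHalf_pd1_mul_of_schwartz hg' hu' hgschwartz hu.schwartz
  rw [huu, mul_zero] at hgreen
  linarith

/-- Lemma 5.1: if `(H(θ) − σ) v = λ u − g`, then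
`2 sin θ ∫ V_θ v u = ∫ ∂_s g · u`. -/
theorem Vu1_identity (θ : ℝ) (hθ : θ ∈ Set.Ioo 0 (π/2))
    (u : ℝ → ℝ → ℝ) (σ : ℝ) (hu : IsModelEigen θ u σ)
    (lam : ℝ) (g : ℝ → ℝ → ℝ)
    (hgsmooth : ∀ n : ℕ, ContDiff ℝ n (fun p : ℝ × ℝ => g p.1 p.2))
    (hgschwartz : SchwartzHalf g)
    (v : ℝ → ℝ → ℝ) (hvsmooth : ∀ n : ℕ, ContDiff ℝ n (fun p : ℝ × ℝ => v p.1 p.2))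
    (hvschwartz : SchwartzHalf v) (hvneumann : ∀ s : ℝ, pd2 v s 0 = 0)
    (hvsol : ∀ s t : ℝ, 0 ≤ t → Hop θ v s t - σ * v s t = lam * u s t - g s t) :
    2 * Real.sin θ * intHalf (fun s t => Vpot θ s t * v s t * u s t) =
      intHalf (fun s t => pd1 g s t * u s t) :=
  Vu1_identity_general θ u σ hu lam g hgsmooth hgschwartz v hvsmooth hvschwartz hvneumann hvsol
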